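/- arXiv:2507.19501 — 2 statements merged into one kernel-verified Lean document; each statement's English description precedes it below -/
import Mathlib

section
/- (Limiting definition of the dual gamma function.) Let a, b ∈ ℝ with a ≠ −n for every n ∈ ℕ, and let â = a + ε b. Then the sequence k ↦ inl((k−1)!) · k^{â} · Ring.inverse((â)_k), where k^{â} := k^{a}·(1 + (b · log k)·ε), tends (as k → ∞, in the topology of DualNumber ℝ) to Γ_d(â) = Γ(a) + ε b Γ′(a). -/
open TrivSqZeroExt
open scoped DualNumber

/-- The dual gamma function `Γ_d(a + ε b) = Γ(a) + ε b Γ'(a)`. -/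
noncomputable def dualGamma (a b : ℝ) : DualNumber ℝ :=
  inl (Real.Gamma a) + (b * deriv Real.Gamma a) • ε

/-- The dual shifted factorial `(â)_k = â(â+1)⋯(â+k-1)`. -/
def dualPoch (x : DualNumber ℝ) : ℕ → DualNumber ℝ
  | 0 => 1
  | k + 1 => dualPoch x k * (x + (k : DualNumber ℝ))

open Filter Topology Finset Set

section auxiliary

lemma aux_log_tendsto (c : ℝ) :
    Tendsto (fun k : ℕ => Real.log (c + k) - Real.log k) atTop (𝓝 0) := by
  have h1 : Tendsto (fun k : ℕ => c / k + 1) atTop (𝓝 1) := by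
    simpa using (tendsto_const_div_atTop_nhds_zero_nat c).add_const 1
  have h2 : Tendsto (fun k : ℕ => Real.log (c / k + 1)) atTop (𝓝 0) := by
    simpa [Function.comp_def] using ((Real.continuousAt_log one_ne_zero).tendsto.comp h1)
  apply h2.congr'
  filter_upwards [eventually_gt_atTop ⌈|c|⌉₊] with k hk
  have habs : |c| < (k : ℝ) := Nat.lt_of_ceil_lt hk
  have hk0 : (0:ℝ) < k := lt_of_le_of_lt (abs_nonneg c) habs
  have hck : 0 < c + k := by
    have := neg_abs_le c; linarith
  rw [show c / k + 1 = (c + k) / k by field_simp, Real.log_div hck.ne' hk0.ne']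

lemma digamma_limit_pos (a : ℝ) (hapos : 0 < a) :
    Tendsto (fun k : ℕ => Real.log k - ∑ j ∈ Finset.range k, (a + j)⁻¹) atTop
      (𝓝 (deriv (Real.log ∘ Real.Gamma) a)) := by
  set f := Real.log ∘ Real.Gamma with hf
  have hc : ConvexOn ℝ (Ioi 0) f := Real.convexOn_log_Gamma
  have h_rec : ∀ x : ℝ, 0 < x → f (x + 1) = f x + Real.log x := fun x hx => by
    simp only [hf, Function.comp_apply, Real.Gamma_add_one hx.ne',
      Real.log_mul hx.ne' (Real.Gamma_pos_of_pos hx).ne', add_comm]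
  have hder : ∀ {x : ℝ}, 0 < x → DifferentiableAt ℝ f x := fun {x} hx => by
    refine ((Real.differentiableAt_Gamma ?_).log (Real.Gamma_ne_zero ?_)) <;>
      exact fun m h => by rw [h] at hx; have := (m.cast_nonneg (α := ℝ)); linarith
  have hder_rec : ∀ x : ℝ, 0 < x → deriv f (x + 1) = deriv f x + 1 / x := fun x hx => by
    rw [← deriv_comp_add_const, one_div, ← Real.deriv_log,
      ← deriv_add (hder <| by positivity) (Real.differentiableAt_log hx.ne')]
    apply Filter.EventuallyEq.deriv_eq
    filter_upwards [eventually_gt_nhds hx] using h_rec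
  have hsum : ∀ k : ℕ, deriv f (a + k) = deriv f a + ∑ j ∈ Finset.range k, (a + j)⁻¹ := by
    intro k
    induction k with
    | zero => simp
    | succ n ih =>
      have : a + (n + 1 : ℕ) = (a + n) + 1 := by push_cast; ring
      rw [this, hder_rec _ (by positivity), ih, Finset.sum_range_succ]
      rw [one_div]
      ring
  have hub : ∀ x : ℝ, 0 < x → deriv f x ≤ Real.log x := by
    intro x hx
    have := hc.deriv_le_slope (mem_Ioi.mpr hx) (mem_Ioi.mpr (by linarith : (0:ℝ) < x + 1))
      (by linarith) (hder hx)
    rwa [slope_def_field, h_rec x hx, add_sub_cancel_left, add_sub_cancel_left, div_one] at this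
  have hlb : ∀ x : ℝ, 1 < x → Real.log (x - 1) ≤ deriv f x := by
    intro x hx
    have h0 : (0:ℝ) < x - 1 := by linarith
    have hfx := h_rec _ h0
    rw [sub_add_cancel] at hfx
    have := hc.slope_le_deriv (mem_Ioi.mpr h0) (mem_Ioi.mpr (by linarith : (0:ℝ) < x))
      (by linarith) (hder (by linarith))
    rw [slope_def_field, hfx] at this
    simpa [sub_sub_cancel] using this
  have hmid : Tendsto (fun k : ℕ => deriv f (a + k) - Real.log k) atTop (𝓝 0) := by
    apply tendsto_of_tendsto_of_tendsto_of_le_of_le' (aux_log_tendsto (a - 1)) (aux_log_tendsto a)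
    · filter_upwards [eventually_ge_atTop 1] with k hk
      have hk1 : (1:ℝ) ≤ k := by exact_mod_cast hk
      have : Real.log (a - 1 + k) = Real.log ((a + k) - 1) := by ring_nf
      rw [this]
      exact sub_le_sub_right (hlb _ (by linarith)) _
    · filter_upwards with k
      exact sub_le_sub_right (hub _ (by positivity)) _
  have := (tendsto_const_nhds (x := deriv f a) (f := atTop (α := ℕ))).sub hmid
  rw [sub_zero] at this
  apply this.congr
  intro k
  rw [hsum k]
  ring

lemma deriv_Gamma_succ (a : ℝ) (ha : ∀ n : ℕ, a ≠ -n) :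
    deriv Real.Gamma (a + 1) = Real.Gamma a + a * deriv Real.Gamma a := by
  have ha0 : a ≠ 0 := by simpa using ha 0
  have hd : HasDerivAt Real.Gamma (deriv Real.Gamma a) a :=
    (Real.differentiableAt_Gamma ha).hasDerivAt
  have hg : HasDerivAt (fun x : ℝ => x * Real.Gamma x)
      (1 * Real.Gamma a + a * deriv Real.Gamma a) a := (hasDerivAt_id a).mul hd
  have ha1 : ∀ n : ℕ, a + 1 ≠ -n := by
    intro n h
    have := ha (n + 1); push_cast at this; apply this; linarith
  have hd1 : HasDerivAt (fun x : ℝ => Real.Gamma (x + 1)) (deriv Real.Gamma (a + 1)) a :=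
    ((Real.differentiableAt_Gamma ha1).hasDerivAt).comp_add_const a 1
  have heq : (fun x : ℝ => Real.Gamma (x + 1)) =ᶠ[𝓝 a] fun x => x * Real.Gamma x := by
    filter_upwards [eventually_ne_nhds ha0] with x hx
    exact Real.Gamma_add_one hx
  have := (hd1.congr_of_eventuallyEq heq.symm).unique hg
  rw [this]; ring

lemma digamma_limit (a : ℝ) (ha : ∀ n : ℕ, a ≠ -n) :
    Tendsto (fun k : ℕ => Real.log k - ∑ j ∈ Finset.range k, (a + j)⁻¹) atTop
      (𝓝 (deriv Real.Gamma a / Real.Gamma a)) := by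
  obtain ⟨N, hN⟩ : ∃ N : ℕ, 0 < a + N := by
    obtain ⟨N, hN⟩ := exists_nat_gt (-a)
    exact ⟨N, by linarith⟩
  induction N generalizing a with
  | zero =>
    push_cast at hN
    rw [add_zero] at hN
    have h := digamma_limit_pos a hN
    have hG : Real.Gamma a ≠ 0 := Real.Gamma_ne_zero ha
    rwa [show deriv (Real.log ∘ Real.Gamma) a = deriv Real.Gamma a / Real.Gamma a by
      rw [Function.comp_def, deriv.log (Real.differentiableAt_Gamma ha) hG]] at h
  | succ N ih =>
    have ha0 : a ≠ 0 := by simpa using ha 0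
    have ha1 : ∀ n : ℕ, a + 1 ≠ -n := by
      intro n h; have := ha (n + 1); push_cast at this; apply this; linarith
    have L1 := ih (a + 1) ha1 (by push_cast at hN ⊢; linarith)
    have hG : Real.Gamma a ≠ 0 := Real.Gamma_ne_zero ha
    have hval : deriv Real.Gamma (a + 1) / Real.Gamma (a + 1) - a⁻¹ + 0
        = deriv Real.Gamma a / Real.Gamma a := by
      rw [deriv_Gamma_succ a ha, Real.Gamma_add_one ha0]
      field_simp
      ring
    have htail : Tendsto (fun k : ℕ => (a + k)⁻¹) atTop (𝓝 0) := by
      apply Tendsto.comp tendsto_inv_atTop_zero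
      exact tendsto_atTop_add_const_left _ a (tendsto_natCast_atTop_atTop (R := ℝ))
    have := ((L1.sub_const a⁻¹).add htail)
    rw [hval] at this
    apply this.congr'
    filter_upwards [eventually_ge_atTop 1] with k hk
    obtain ⟨m, rfl⟩ := Nat.exists_eq_add_of_le hk
    have h1 : ∑ j ∈ Finset.range (1 + m), (a + j)⁻¹
        = (∑ j ∈ Finset.range m, (a + 1 + j)⁻¹) + a⁻¹ := by
      rw [show 1 + m = m + 1 by ring, Finset.sum_range_succ']
      simp only [Nat.cast_add, Nat.cast_one, Nat.cast_zero, add_zero]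
      congr 1
      apply Finset.sum_congr rfl
      intro j _
      congr 1
      ring
    have h2 : ∑ j ∈ Finset.range (1 + m), (a + 1 + j)⁻¹
        = (∑ j ∈ Finset.range m, (a + 1 + j)⁻¹) + (a + 1 + m)⁻¹ := by
      rw [show 1 + m = m + 1 by ring, Finset.sum_range_succ]
    have h3 : (a + 1 + (m:ℝ))⁻¹ = (a + (1 + m : ℕ))⁻¹ := by push_cast; ring_nf
    rw [h2, h3, h1]
    ring

lemma fst_aeps (a b : ℝ) : (inl a + b • ε : DualNumber ℝ).fst = a := by
  rw [fst_add, fst_inl, fst_smul, DualNumber.fst_eps, smul_zero, add_zero]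

lemma snd_aeps (a b : ℝ) : (inl a + b • ε : DualNumber ℝ).snd = b := by
  rw [snd_add, snd_inl, snd_smul, DualNumber.snd_eps, smul_eq_mul, mul_one, zero_add]

lemma fst_dualPoch (a b : ℝ) (k : ℕ) :
    (dualPoch (inl a + b • ε) k).fst = ∏ j ∈ Finset.range k, (a + j) := by
  induction k with
  | zero => simp [dualPoch]
  | succ n ih =>
    rw [dualPoch, fst_mul, ih, Finset.prod_range_succ, fst_add, fst_aeps, fst_natCast]

lemma snd_dualPoch (a b : ℝ) (ha : ∀ n : ℕ, a ≠ -n) (k : ℕ) :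
    (dualPoch (inl a + b • ε) k).snd
      = b * (∏ j ∈ Finset.range k, (a + j)) * ∑ j ∈ Finset.range k, (a + j)⁻¹ := by
  induction k with
  | zero => simp [dualPoch]
  | succ n ih =>
    have hn : a + (n : ℝ) ≠ 0 := by
      intro h; exact ha n (by linarith)
    rw [dualPoch, snd_mul, ih, fst_dualPoch, snd_add, snd_aeps, snd_natCast,
      Finset.prod_range_succ, Finset.sum_range_succ, fst_add, fst_aeps, fst_natCast]
    simp only [smul_eq_mul, MulOpposite.smul_eq_mul_unop, MulOpposite.unop_op, add_zero]
    field_simp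
    ring

lemma ringInverse_eq (x : DualNumber ℝ) (h : x.fst ≠ 0) : Ring.inverse x = x⁻¹ := by
  letI : Invertible x.fst := invertibleOfNonzero h
  letI : Invertible x := TrivSqZeroExt.invertibleOfInvertibleFst x
  rw [Ring.inverse_invertible, TrivSqZeroExt.invOf_eq_inv]

end auxiliary

/-- The limiting definition of the dual gamma function:
`Γ_d(â) = lim_{k → ∞} (k-1)! k^â / (â)_k`, where `k^â = k^a (1 + ε b log k)`. -/
theorem dualGamma_eq_limit (a b : ℝ) (ha : ∀ n : ℕ, a ≠ -n) :
    Filter.Tendsto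
      (fun k : ℕ =>
        ((inl ((k - 1).factorial : ℝ) : DualNumber ℝ) *
            (inl ((k : ℝ) ^ a) * (1 + (b * Real.log k) • ε))) *
          Ring.inverse (dualPoch (inl a + b • ε) k))
      Filter.atTop (nhds (dualGamma a b)) := by
  have haj : ∀ j : ℕ, a + (j : ℝ) ≠ 0 := fun j h => ha j (by linarith)
  have hP : ∀ k : ℕ, (∏ j ∈ Finset.range k, (a + j)) ≠ 0 := fun k =>
    Finset.prod_ne_zero_iff.mpr fun j _ => haj j
  set P : ℕ → ℝ := fun k => ∏ j ∈ Finset.range k, (a + j) with hPdef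
  set H : ℕ → ℝ := fun k => ∑ j ∈ Finset.range k, (a + j)⁻¹ with hHdef
  set G : ℕ → ℝ := fun k => ((k - 1).factorial : ℝ) * (k : ℝ) ^ a * (P k)⁻¹ with hGdef
  set T : ℕ → DualNumber ℝ := fun k =>
      ((inl ((k - 1).factorial : ℝ) : DualNumber ℝ) *
        (inl ((k : ℝ) ^ a) * (1 + (b * Real.log k) • ε))) *
      Ring.inverse (dualPoch (inl a + b • ε) k) with hTdef
  have hfstT : ∀ k, (T k).fst = G k := by
    intro k
    rw [hTdef]
    simp only
    rw [ringInverse_eq _ (by rw [fst_dualPoch]; exact hP k), fst_mul, fst_mul, fst_mul,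
      fst_inl, fst_inl, fst_inv, fst_dualPoch, fst_add, fst_one, fst_smul,
      DualNumber.fst_eps, smul_zero, add_zero, mul_one]
  have hsndT : ∀ k, (T k).snd = G k * (b * Real.log k - b * H k) := by
    intro k
    rw [hTdef]
    simp only
    rw [ringInverse_eq _ (by rw [fst_dualPoch]; exact hP k), snd_mul, snd_mul, snd_mul,
      snd_inv, fst_dualPoch, snd_dualPoch a b ha, fst_mul, fst_mul, fst_inl, fst_inl,
      fst_add, fst_one, fst_smul, DualNumber.fst_eps, smul_zero, add_zero,
      snd_add, snd_one, snd_smul, DualNumber.snd_eps, snd_inl]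
    simp only [MulOpposite.smul_eq_mul_unop, MulOpposite.unop_op, smul_eq_mul, smul_zero,
      mul_zero, zero_add, mul_one, add_zero, zero_mul, fst_inv, fst_dualPoch, hGdef, hHdef, hPdef, snd_inl]
    have := hP k
    field_simp
    ring
  have h1 : Tendsto G atTop (𝓝 (Real.Gamma a)) := by
    have hquot : Tendsto (fun k : ℕ => (a + k) / k) atTop (𝓝 1) := by
      have h0 : Tendsto (fun k : ℕ => a / k + 1) atTop (𝓝 1) := by
        simpa using (tendsto_const_div_atTop_nhds_zero_nat a).add_const 1
      apply h0.congr'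
      filter_upwards [eventually_ge_atTop 1] with k hk
      have hk0 : (k : ℝ) ≠ 0 := Nat.cast_ne_zero.mpr (by omega)
      field_simp
    have h2 := (Real.GammaSeq_tendsto_Gamma a).mul hquot
    rw [mul_one] at h2
    apply h2.congr'
    filter_upwards [eventually_ge_atTop 1] with k hk
    have hk0 : (k : ℝ) ≠ 0 := Nat.cast_ne_zero.mpr (by omega)
    have hfac : (k.factorial : ℝ) = k * (k - 1).factorial := by
      rw_mod_cast [Nat.mul_factorial_pred (by omega)]
    rw [Real.GammaSeq, Finset.prod_range_succ, hGdef]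
    simp only
    rw [hfac]
    have := hP k
    have := haj k
    simp only [hPdef]
    field_simp
  have h2 : Tendsto (fun k => G k * (b * Real.log k - b * H k)) atTop
      (𝓝 (b * deriv Real.Gamma a)) := by
    have hGa : Real.Gamma a ≠ 0 := Real.Gamma_ne_zero ha
    have := (h1.mul (digamma_limit a ha)).const_mul b
    have hval : b * (Real.Gamma a * (deriv Real.Gamma a / Real.Gamma a))
        = b * deriv Real.Gamma a := by field_simp
    rw [hval] at this
    apply this.congr
    intro k
    rw [hHdef]
    ring
  have hdf : fst (dualGamma a b) = Real.Gamma a := by rw [dualGamma, fst_aeps]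
  have hds : snd (dualGamma a b) = b * deriv Real.Gamma a := by rw [dualGamma, snd_aeps]
  rw [TrivSqZeroExt.nhds_def, hdf, hds]
  have := Filter.Tendsto.prodMk (h1.congr (fun k => (hfstT k).symm))
    (h2.congr (fun k => (hsndT k).symm))
  exact this
end

section
/- (Functional relations of the dual beta function, part 2.) Let â = a + ε b, ĉ = c + ε d, ê = e + ε f be real dual numbers with a > 0, c > 0, e > 0. Then β_d(â, ĉ) · β_d(â + ĉ, ê) = β_d(ĉ, ê) · β_d(ĉ + ê, â) = β_d(ê, â) · β_d(â + ê, ĉ) in DualNumber ℝ. -/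
open TrivSqZeroExt MeasureTheory
open scoped DualNumber

/-- The dual beta function `β_d(a + ε b, c + ε d)`. -/
noncomputable def dualBeta (a b c d : ℝ) : DualNumber ℝ :=
  inl (∫ t in (0 : ℝ)..1, t ^ (a - 1) * (1 - t) ^ (c - 1)) +
    ((b * ∫ t in (0 : ℝ)..1, t ^ (a - 1) * (1 - t) ^ (c - 1) * Real.log t) +
      (d * ∫ t in (0 : ℝ)..1, t ^ (a - 1) * (1 - t) ^ (c - 1) * Real.log (1 - t))) • ε

open MeasureTheory Set

noncomputable def Bf (a c : ℝ) : ℝ := ∫ t in (0:ℝ)..1, t^(a-1)*(1-t)^(c-1)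
noncomputable def Lf1 (a c : ℝ) : ℝ := ∫ t in (0:ℝ)..1, t^(a-1)*(1-t)^(c-1)*Real.log t
noncomputable def Lf2 (a c : ℝ) : ℝ := ∫ t in (0:ℝ)..1, t^(a-1)*(1-t)^(c-1)*Real.log (1-t)

lemma integrand_eq {t : ℝ} (ht0 : 0 ≤ t) (ht1 : t ≤ 1) (p q : ℝ) :
    (t:ℂ)^((p:ℂ)+1-1) * (1-(t:ℂ))^((q:ℂ)+1-1) = ((t^p*(1-t)^q : ℝ) : ℂ) := by
  rw [add_sub_cancel_right, add_sub_cancel_right]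
  rw [show (1 - (t:ℂ)) = ((1-t : ℝ) : ℂ) by push_cast; ring]
  rw [← Complex.ofReal_cpow ht0, ← Complex.ofReal_cpow (by linarith)]
  push_cast; ring

lemma intable {p q : ℝ} (hp : -1 < p) (hq : -1 < q) :
    IntervalIntegrable (fun t : ℝ => t^p*(1-t)^q) volume 0 1 := by
  have h := (Complex.betaIntegral_convergent (u := (p:ℂ)+1) (v := (q:ℂ)+1)
    (by simpa using by linarith) (by simpa using by linarith)).norm
  apply h.congr
  intro t ht
  rw [uIoc_of_le zero_le_one] at ht
  show ‖(t:ℂ)^((p:ℂ)+1-1) * (1-(t:ℂ))^((q:ℂ)+1-1)‖ = _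
  rw [integrand_eq ht.1.le ht.2 p q, Complex.norm_real, Real.norm_eq_abs,
      abs_of_nonneg (mul_nonneg (Real.rpow_nonneg ht.1.le _) (Real.rpow_nonneg (by linarith [ht.2]) _))]

lemma Bf_eq {a c : ℝ} (ha : 0 < a) (hc : 0 < c) :
    Bf a c = Real.Gamma a * Real.Gamma c / Real.Gamma (a + c) := by
  have key := Complex.Gamma_mul_Gamma_eq_betaIntegral (s := (a:ℂ)) (t := (c:ℂ))
    (by simpa using ha) (by simpa using hc)
  have hbeta : Complex.betaIntegral a c = ((Bf a c : ℝ) : ℂ) := by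
    rw [Complex.betaIntegral, Bf, ← intervalIntegral.integral_ofReal]
    apply intervalIntegral.integral_congr
    intro t ht
    rw [uIcc_of_le zero_le_one] at ht
    have := integrand_eq ht.1 ht.2 (a-1) (c-1)
    push_cast at this ⊢
    simpa using this
  rw [hbeta, ← Complex.ofReal_add, Complex.Gamma_ofReal, Complex.Gamma_ofReal,
    Complex.Gamma_ofReal, ← Complex.ofReal_mul, ← Complex.ofReal_mul] at key
  have := Complex.ofReal_injective key
  have hne : Real.Gamma (a + c) ≠ 0 := (Real.Gamma_pos_of_pos (by linarith)).ne'
  field_simp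
  linarith [this]

lemma Bf_symm (a c : ℝ) : Bf a c = Bf c a := by
  have := intervalIntegral.integral_comp_sub_left
    (fun t : ℝ => t^(c-1)*(1-t)^(a-1)) 1 (a := 0) (b := 1)
  simp only [sub_zero, sub_self] at this
  rw [Bf, Bf, ← this]
  apply intervalIntegral.integral_congr
  intro t _
  simp only []
  rw [show (1:ℝ) - (1 - t) = t by ring]
  ring

lemma Lf2_eq (a c : ℝ) : Lf2 a c = Lf1 c a := by
  have := intervalIntegral.integral_comp_sub_left
    (fun t : ℝ => t^(c-1)*(1-t)^(a-1)*Real.log t) 1 (a := 0) (b := 1)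
  simp only [sub_zero, sub_self] at this
  rw [Lf2, Lf1, ← this]
  apply intervalIntegral.integral_congr
  intro t _
  simp only []
  rw [show (1:ℝ) - (1 - t) = t by ring]
  ring

lemma log_bound {t s : ℝ} (ht : 0 < t) (ht1 : t ≤ 1) (hs : 0 < s) :
    |Real.log t| ≤ s⁻¹ * t^(-s) := by
  have hlog : Real.log t ≤ 0 := Real.log_nonpos ht.le ht1
  rw [abs_of_nonpos hlog]
  have h1 : Real.log (t^(-s)) ≤ t^(-s) - 1 :=
    Real.log_le_sub_one_of_pos (Real.rpow_pos_of_pos ht _)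
  rw [Real.log_rpow ht] at h1
  rw [inv_mul_eq_div, le_div_iff₀ hs]
  nlinarith

lemma hasDerivAt_Bf_fst {a c : ℝ} (ha : 0 < a) (hc : 0 < c) :
    HasDerivAt (fun x => Bf x c) (Lf1 a c) a := by
  set μ := volume.restrict (Ioc (0:ℝ) 1) with hμ
  have hrw : ∀ x : ℝ, Bf x c = ∫ t, (t^(x-1)*(1-t)^(c-1)) ∂μ := fun x => by
    rw [Bf, intervalIntegral.integral_of_le zero_le_one]
  have hrw2 : Lf1 a c = ∫ t, (t^(a-1)*(1-t)^(c-1)*Real.log t) ∂μ := by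
    rw [Lf1, intervalIntegral.integral_of_le zero_le_one]
  simp only [hrw, hrw2]
  have hIoo : ∀ᵐ t ∂μ, t ∈ Ioo (0:ℝ) 1 := by
    have h1 : ∀ᵐ t : ℝ, t ≠ (1:ℝ) := by
      rw [ae_iff]
      simpa using measure_mono_null (fun x hx => by simpa using hx) (Real.volume_singleton (a := 1))
    filter_upwards [ae_restrict_mem measurableSet_Ioc, ae_restrict_of_ae h1] with t ht hne
    exact ⟨ht.1, lt_of_le_of_ne ht.2 hne⟩
  have hmeasF : ∀ x : ℝ, AEStronglyMeasurable (fun t : ℝ => t^(x-1)*(1-t)^(c-1)) μ := by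
    intro x
    exact (by fun_prop : Measurable (fun t : ℝ => t^(x-1)*(1-t)^(c-1))).aestronglyMeasurable
  have key := hasDerivAt_integral_of_dominated_loc_of_deriv_le (μ := μ)
    (F := fun x t => t^(x-1)*(1-t)^(c-1))
    (F' := fun x t => t^(x-1)*(1-t)^(c-1)*Real.log t)
    (x₀ := a)
    (bound := fun t => t^(a/2-1)*(1-t)^(c-1)*|Real.log t|)
    (Metric.ball_mem_nhds a (half_pos ha))
    (Filter.Eventually.of_forall hmeasF)
    (by
      rw [← IntegrableOn, ← intervalIntegrable_iff_integrableOn_Ioc_of_le zero_le_one]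
      exact intable (by linarith) (by linarith))
    (((by fun_prop : Measurable (fun t : ℝ => t^(a-1)*(1-t)^(c-1)))).mul
      Real.measurable_log).aestronglyMeasurable
    ?_ ?_ ?_
  · exact key.2
  · -- bound
    filter_upwards [ae_restrict_mem measurableSet_Ioc] with t ht x hx
    have ht0 : 0 < t := ht.1
    have ht1 : t ≤ 1 := ht.2
    have h1t : (0:ℝ) ≤ 1 - t := by linarith
    rw [Real.norm_eq_abs, abs_mul, abs_mul,
      abs_of_nonneg (Real.rpow_nonneg ht0.le _), abs_of_nonneg (Real.rpow_nonneg h1t _)]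
    have hxb : a/2 - 1 ≤ x - 1 := by
      rw [Metric.mem_ball, Real.dist_eq, abs_lt] at hx; linarith [hx.1]
    have hle : t^(x-1) ≤ t^(a/2-1) := Real.rpow_le_rpow_of_exponent_ge ht0 ht1 hxb
    have := mul_le_mul_of_nonneg_right hle (Real.rpow_nonneg h1t (c-1))
    exact mul_le_mul_of_nonneg_right this (abs_nonneg _)
  · -- integrable bound
    have hg : Integrable (fun t : ℝ => (4/a) * (t^(a/4-1)*(1-t)^(c-1))) μ := by
      rw [← IntegrableOn, ← intervalIntegrable_iff_integrableOn_Ioc_of_le zero_le_one]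
      exact (intable (by linarith) (by linarith)).const_mul _
    refine hg.mono ?_ ?_
    · exact (((by fun_prop : Measurable (fun t : ℝ => t^(a/2-1)*(1-t)^(c-1)))).mul
        Real.measurable_log.abs).aestronglyMeasurable
    · filter_upwards [ae_restrict_mem measurableSet_Ioc] with t ht
      have ht0 : 0 < t := ht.1
      have ht1 : t ≤ 1 := ht.2
      have h1t : (0:ℝ) ≤ 1 - t := by linarith
      have hb1 : |Real.log t| ≤ (a/4)⁻¹ * t^(-(a/4)) := log_bound ht0 ht1 (by positivity)
      rw [Real.norm_eq_abs, Real.norm_eq_abs,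
        abs_of_nonneg (by positivity : (0:ℝ) ≤ (4/a) * (t^(a/4-1)*(1-t)^(c-1))),
        abs_mul, abs_mul, abs_abs,
        abs_of_nonneg (Real.rpow_nonneg ht0.le _), abs_of_nonneg (Real.rpow_nonneg h1t _)]
      have h2 : t^(a/2-1)*(1-t)^(c-1)*|Real.log t|
          ≤ t^(a/2-1)*(1-t)^(c-1)*((a/4)⁻¹ * t^(-(a/4))) := by
        apply mul_le_mul_of_nonneg_left hb1
        exact mul_nonneg (Real.rpow_nonneg ht0.le _) (Real.rpow_nonneg h1t _)
      refine h2.trans (le_of_eq ?_)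
      rw [show (4/a : ℝ) = (a/4)⁻¹ by rw [inv_div],
        show t^(a/4-1) = t^(a/2-1) * t^(-(a/4)) by
          rw [← Real.rpow_add ht0]; norm_num; ring_nf]
      ring
  · -- differentiability
    filter_upwards [hIoo] with t ht x _
    have ht0 : 0 < t := ht.1
    have h := ((Real.hasStrictDerivAt_const_rpow ht0 (x-1)).hasDerivAt.comp x
      ((hasDerivAt_id' x).sub_const 1)).mul_const ((1-t)^(c-1))
    exact h.congr_deriv (by ring)

lemma hasDerivAt_Bf_snd {a c : ℝ} (ha : 0 < a) (hc : 0 < c) :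
    HasDerivAt (fun y => Bf a y) (Lf2 a c) c := by
  have h := hasDerivAt_Bf_fst hc ha
  rw [show Lf1 c a = Lf2 a c from (Lf2_eq a c).symm] at h
  exact h.congr_of_eventuallyEq (Filter.Eventually.of_forall fun x => (Bf_symm a x))

lemma Bf_prod {a c e : ℝ} (ha : 0 < a) (hc : 0 < c) (he : 0 < e) :
    Bf a c * Bf (a+c) e = Bf c e * Bf (c+e) a := by
  rw [Bf_eq ha hc, Bf_eq (by linarith) he, Bf_eq hc he, Bf_eq (by linarith) ha]
  have h1 : Real.Gamma (a+c) ≠ 0 := (Real.Gamma_pos_of_pos (by linarith)).ne'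
  have h2 : Real.Gamma (c+e) ≠ 0 := (Real.Gamma_pos_of_pos (by linarith)).ne'
  have h3 : Real.Gamma (a+c+e) ≠ 0 := (Real.Gamma_pos_of_pos (by linarith)).ne'
  rw [show c+e+a = a+c+e by ring]
  field_simp

lemma coeff_b {a c e : ℝ} (ha : 0 < a) (hc : 0 < c) (he : 0 < e) :
    Lf1 a c * Bf (a+c) e + Bf a c * Lf1 (a+c) e = Bf c e * Lf2 (c+e) a := by
  have hB : HasDerivAt (fun x : ℝ => Bf (x+c) e) (Lf1 (a+c) e * 1) a :=
    (hasDerivAt_Bf_fst (add_pos ha hc) he).comp (h₂ := fun x => Bf x e) a ((hasDerivAt_id' a).add_const c)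
  have hF : HasDerivAt (fun x => Bf x c * Bf (x+c) e)
      (Lf1 a c * Bf (a+c) e + Bf a c * (Lf1 (a+c) e * 1)) a :=
    (hasDerivAt_Bf_fst ha hc).mul hB
  have hG : HasDerivAt (fun x => Bf c e * Bf (c+e) x) (Bf c e * Lf2 (c+e) a) a :=
    (hasDerivAt_Bf_snd (add_pos hc he) ha).const_mul _
  have heq : (fun x => Bf x c * Bf (x+c) e) =ᶠ[nhds a] (fun x => Bf c e * Bf (c+e) x) :=
    (eventually_gt_nhds ha).mono fun x hx => Bf_prod hx hc he
  have h := (hF.congr_of_eventuallyEq heq.symm).unique hG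
  linear_combination h

lemma coeff_d {a c e : ℝ} (ha : 0 < a) (hc : 0 < c) (he : 0 < e) :
    Lf2 a c * Bf (a+c) e + Bf a c * Lf1 (a+c) e
      = Lf1 c e * Bf (c+e) a + Bf c e * Lf1 (c+e) a := by
  have hB : HasDerivAt (fun x : ℝ => Bf (a+x) e) (Lf1 (a+c) e * 1) c :=
    (hasDerivAt_Bf_fst (add_pos ha hc) he).comp c ((hasDerivAt_id c).const_add a)
  have hF : HasDerivAt (fun x => Bf a x * Bf (a+x) e)
      (Lf2 a c * Bf (a+c) e + Bf a c * (Lf1 (a+c) e * 1)) c :=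
    (hasDerivAt_Bf_snd ha hc).mul hB
  have hB' : HasDerivAt (fun x : ℝ => Bf (x+e) a) (Lf1 (c+e) a * 1) c :=
    (hasDerivAt_Bf_fst (add_pos hc he) ha).comp (h₂ := fun x => Bf x a) c ((hasDerivAt_id' c).add_const e)
  have hG : HasDerivAt (fun x => Bf x e * Bf (x+e) a)
      (Lf1 c e * Bf (c+e) a + Bf c e * (Lf1 (c+e) a * 1)) c :=
    (hasDerivAt_Bf_fst hc he).mul hB'
  have heq : (fun x => Bf a x * Bf (a+x) e) =ᶠ[nhds c] (fun x => Bf x e * Bf (x+e) a) :=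
    (eventually_gt_nhds hc).mono fun x hx => Bf_prod ha hx he
  have h := (hF.congr_of_eventuallyEq heq.symm).unique hG
  linear_combination h

lemma coeff_f {a c e : ℝ} (ha : 0 < a) (hc : 0 < c) (he : 0 < e) :
    Bf a c * Lf2 (a+c) e = Lf2 c e * Bf (c+e) a + Bf c e * Lf1 (c+e) a := by
  have hF : HasDerivAt (fun x => Bf a c * Bf (a+c) x) (Bf a c * Lf2 (a+c) e) e :=
    (hasDerivAt_Bf_snd (add_pos ha hc) he).const_mul _
  have hB' : HasDerivAt (fun x : ℝ => Bf (c+x) a) (Lf1 (c+e) a * 1) e :=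
    (hasDerivAt_Bf_fst (add_pos hc he) ha).comp e ((hasDerivAt_id e).const_add c)
  have hG : HasDerivAt (fun x => Bf c x * Bf (c+x) a)
      (Lf2 c e * Bf (c+e) a + Bf c e * (Lf1 (c+e) a * 1)) e :=
    (hasDerivAt_Bf_snd hc he).mul hB'
  have heq : (fun x => Bf a c * Bf (a+c) x) =ᶠ[nhds e] (fun x => Bf c x * Bf (c+x) a) :=
    (eventually_gt_nhds he).mono fun x hx => Bf_prod ha hc hx
  have h := (hF.congr_of_eventuallyEq heq.symm).unique hG
  linear_combination h

lemma dualBeta_eq (a b c d : ℝ) :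
    dualBeta a b c d = inl (Bf a c) + (b * Lf1 a c + d * Lf2 a c) • ε := rfl

lemma dual_mul (X Y u v : ℝ) :
    (inl X + u • (ε : DualNumber ℝ)) * (inl Y + v • ε) = inl (X*Y) + (X*v + u*Y) • ε := by
  ext <;> simp [mul_comm]

lemma main_rel {a c e : ℝ} (b d f : ℝ) (ha : 0 < a) (hc : 0 < c) (he : 0 < e) :
    dualBeta a b c d * dualBeta (a + c) (b + d) e f =
      dualBeta c d e f * dualBeta (c + e) (d + f) a b := by
  rw [dualBeta_eq, dualBeta_eq, dualBeta_eq, dualBeta_eq, dual_mul, dual_mul]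
  congr 1
  · rw [Bf_prod ha hc he]
  · congr 1
    have h1 := coeff_b ha hc he
    have h2 := coeff_d ha hc he
    have h3 := coeff_f ha hc he
    have h4 := Bf_prod ha hc he
    linear_combination b * h1 + d * h2 + f * h3

/-- `β_d(â, ĉ) β_d(â+ĉ, ê) = β_d(ĉ, ê) β_d(ĉ+ê, â) = β_d(ê, â) β_d(â+ê, ĉ)`. -/
theorem dualBeta_cyclic_relations (a b c d e f : ℝ) (ha : 0 < a) (hc : 0 < c) (he : 0 < e) :
    dualBeta a b c d * dualBeta (a + c) (b + d) e f =
        dualBeta c d e f * dualBeta (c + e) (d + f) a b ∧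
      dualBeta c d e f * dualBeta (c + e) (d + f) a b =
        dualBeta e f a b * dualBeta (a + e) (b + f) c d := by
  refine ⟨main_rel b d f ha hc he, ?_⟩
  have h := main_rel d f b hc he ha
  rwa [show e + a = a + e by ring, show f + b = b + f by ring] at h
end
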